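/- Bounded downward ratios for weighted bond animals (Proposition 3.5, bond-animal case on Z^d): Let d ≥ 2 and let wt be a weight function satisfying (CA2) on the class of bond animals on Z^d, with size measured by the number of sites. Set 𝒢_n = Σ_{G ∈ C*_n} wt(G). Then there exists a constant Υ > 0 such that 𝒢_{n+1} ≥ Υ · 𝒢_n for all sufficiently large n. -/

import Mathlib

open Filter

/-- A site of the `d`-dimensional hypercubic lattice. -/
abbrev Site (d : ℕ) := Fin d → ℤ

/-- A (pre)graph in `ℤ^d`: a finite set of sites together with a finite set of
(unordered) bonds.  No conditions are imposed at this stage; this is also used as a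
container for the two parts of a pattern, and for the set `D` of Axiom (CA4). -/
structure PreGraph (d : ℕ) where
  sites : Finset (Site d)
  bonds : Finset (Sym2 (Site d))

/-- `b` is a bond of the hypercubic lattice `ℤ^d`: an unordered pair `{x,y}` with
`‖x - y‖₁ = 1`. -/
def IsLatticeBond {d : ℕ} (b : Sym2 (Site d)) : Prop :=
  ∃ x y : Site d, b = s(x, y) ∧ (∑ i, |x i - y i|) = 1

/-- Adjacency inside the graph `G`. -/
def Adj {d : ℕ} (G : PreGraph d) (x y : Site d) : Prop := s(x, y) ∈ G.bonds

/-- `G` is a (bond) animal with respect to the set of allowed lattice bonds `Bd`: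
a finite nonempty connected subgraph of the lattice whose bond set is `Bd`. -/
def IsAnimalOn {d : ℕ} (Bd : Sym2 (Site d) → Prop) (G : PreGraph d) : Prop :=
  G.sites.Nonempty ∧
  (∀ b ∈ G.bonds, Bd b) ∧
  (∀ b ∈ G.bonds, ∀ x ∈ b, x ∈ G.sites) ∧
  (∀ x ∈ G.sites, ∀ y ∈ G.sites, Relation.ReflTransGen (Adj G) x y)

/-- A bond animal on the hypercubic lattice `ℤ^d`. -/
def IsBondAnimal {d : ℕ} (G : PreGraph d) : Prop := IsAnimalOn IsLatticeBond G

/-- `G` contains a cycle: there are `n ≥ 3` distinct sites arranged cyclically with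
consecutive ones joined by bonds of `G`. -/
def HasCycle {d : ℕ} (G : PreGraph d) : Prop :=
  ∃ (n : ℕ) (f : ZMod n → Site d), 3 ≤ n ∧ Function.Injective f ∧
    ∀ i : ZMod n, s(f i, f (i + 1)) ∈ G.bonds

/-- A bond tree: a bond animal containing no cycles. -/
def IsBondTree {d : ℕ} (G : PreGraph d) : Prop := IsBondAnimal G ∧ ¬ HasCycle G

/-- A site animal: a bond animal containing every lattice bond both of whose
endpoints are sites of the animal. -/
def IsSiteAnimal {d : ℕ} (G : PreGraph d) : Prop :=
  IsBondAnimal G ∧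
  ∀ b : Sym2 (Site d), IsLatticeBond b → (∀ x ∈ b, x ∈ G.sites) → b ∈ G.bonds

/-- The translateCluster `G + u`. -/
def translateCluster {d : ℕ} (G : PreGraph d) (u : Site d) : PreGraph d :=
  ⟨G.sites.image (· + u), G.bonds.image (Sym2.map (· + u))⟩

/-- `G` contains the pattern `(P₁, P₂)`: all sites and bonds of `P₁` belong to `G`,
and no site or bond of `P₂` belongs to `G`. -/
def ContainsPattern {d : ℕ} (G P₁ P₂ : PreGraph d) : Prop :=
  P₁.sites ⊆ G.sites ∧ P₁.bonds ⊆ G.bonds ∧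
  (∀ x ∈ P₂.sites, x ∉ G.sites) ∧ (∀ b ∈ P₂.bonds, b ∉ G.bonds)

/-- `(P₁, P₂)` is a pattern: `P₁` and `P₂` are (finite) disjoint sets of sites and
bonds, with `P₁` nonempty. -/
def IsPattern {d : ℕ} (P₁ P₂ : PreGraph d) : Prop :=
  (P₁.sites.Nonempty ∨ P₁.bonds.Nonempty) ∧
  Disjoint P₁.sites P₂.sites ∧ Disjoint P₁.bonds P₂.bonds

/-- `(P₁, P₂)` is a proper pattern for the class `C` of clusters: for infinitely
many `n`, some cluster in `C` of size `n` contains the pattern. -/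
def ProperFor {d : ℕ} (C : PreGraph d → Prop) (P₁ P₂ : PreGraph d) : Prop :=
  {n : ℕ | ∃ G : PreGraph d, C G ∧ G.sites.card = n ∧ ContainsPattern G P₁ P₂}.Infinite

/-- `|τ_P(G)|`: the number of translates of the pattern `(P₁, P₂)` occurring in `G`. -/
noncomputable def patternCount {d : ℕ} (P₁ P₂ G : PreGraph d) : ℕ :=
  {x : Site d | ContainsPattern G (translateCluster P₁ x) (translateCluster P₂ x)}.ncard

/-- Lexicographic (strict) order on sites. -/
def LexLt {d : ℕ} (x y : Site d) : Prop :=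
  ∃ i : Fin d, (∀ j, j < i → x j = y j) ∧ x i < y i

/-- The lexicographically smallest site of `G` is the origin. -/
def LexMinAtOrigin {d : ℕ} (G : PreGraph d) : Prop :=
  (0 : Site d) ∈ G.sites ∧ ∀ x ∈ G.sites, x = 0 ∨ LexLt 0 x

/-- `C*_n` for the class `C`: clusters in `C` of size `n` (number of sites) whose
lexicographically smallest site is the origin; one representative per translation
class. -/
def Cstar {d : ℕ} (C : PreGraph d → Prop) (n : ℕ) : Set (PreGraph d) :=
  {G | C G ∧ G.sites.card = n ∧ LexMinAtOrigin G}

open scoped ENNReal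

/-- Axiom (CA2) for an `ℝ≥0∞`-valued weight function on the class `C`. -/
def CA2 {d : ℕ} (C : PreGraph d → Prop) (wt : PreGraph d → ℝ≥0∞) : Prop :=
  ∀ m : ℕ, ∃ γ : ℝ≥0∞, γ ≠ 0 ∧ γ ≠ ⊤ ∧
    ∀ G G' : PreGraph d, C G → C G' →
      (symmDiff G.sites G'.sites).card + (symmDiff G.bonds G'.bonds).card ≤ m →
      wt G / γ ≤ wt G' ∧ wt G' ≤ γ * wt G

/-- A weight function on the class `C`: positive and finite on clusters,
translation invariant, and satisfying (CA2). -/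
def IsWeight {d : ℕ} (C : PreGraph d → Prop) (wt : PreGraph d → ℝ≥0∞) : Prop :=
  (∀ G, C G → wt G ≠ 0 ∧ wt G ≠ ⊤) ∧
  (∀ (G : PreGraph d) (u : Site d), wt (translateCluster G u) = wt G) ∧
  CA2 C wt

/-- Weighted sum of a set of clusters (`ℝ≥0∞`-valued weights). -/
noncomputable def Gsum {d : ℕ} (S : Set (PreGraph d)) (wt : PreGraph d → ℝ≥0∞) : ℝ≥0∞ :=
  ∑' G : S, wt G

/-- Weighted sum of a set of clusters (real-valued weights). -/
noncomputable def GsumR {d : ℕ} (S : Set (PreGraph d)) (f : PreGraph d → ℝ) : ℝ :=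
  ∑' G : S, f G

/-- `mono(G)`: the number of lattice bonds not in `G` with both endpoints in `G`. -/
noncomputable def monoCount {d : ℕ} (G : PreGraph d) : ℕ :=
  {b : Sym2 (Site d) | IsLatticeBond b ∧ b ∉ G.bonds ∧ ∀ x ∈ b, x ∈ G.sites}.ncard

/-- `solv(G)`: the number of lattice bonds not in `G` with exactly one endpoint in `G`. -/
noncomputable def solvCount {d : ℕ} (G : PreGraph d) : ℕ :=
  {b : Sym2 (Site d) | IsLatticeBond b ∧ b ∉ G.bonds ∧
    ∃ x y : Site d, b = s(x, y) ∧ x ∈ G.sites ∧ y ∉ G.sites}.ncard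

/-!
Shift an animal `G ∈ C*_n` by the first unit vector `e` and attach the origin to `e` by a new
bond. Lexicographic minimality of the origin in `G` gives every shifted site a positive first
coordinate, so the origin is a new site and the lexicographic minimum of the result, which
therefore lies in `C*_{n+1}`; erasing the origin and its bond recovers `G + e`, so the map is
injective. The result differs from `G + e` in one site and one bond, hence by (CA2) with `m = 2`
and translation invariance its weight is at least `γ₂⁻¹ wt G`.
-/

namespace PreGraph

variable {d : ℕ}

instance (G : PreGraph d) : Std.Symm (Adj G) where
  symm x y h := by rwa [Adj, Sym2.eq_swap]

def addPendant (H : PreGraph d) (x y : Site d) : PreGraph d :=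
  ⟨insert x H.sites, insert s(x, y) H.bonds⟩

lemma card_symmDiff_addPendant {H : PreGraph d} {x y : Site d} (hx : x ∉ H.sites)
    (hxy : s(x, y) ∉ H.bonds) :
    (symmDiff H.sites (H.addPendant x y).sites).card
      + (symmDiff H.bonds (H.addPendant x y).bonds).card = 2 := by
  rw [addPendant, symmDiff_of_le (Finset.subset_insert x H.sites),
    symmDiff_of_le (Finset.subset_insert s(x, y) H.bonds), Finset.insert_sdiff_cancel hx,
    Finset.insert_sdiff_cancel hxy, Finset.card_singleton, Finset.card_singleton]

end PreGraph

open PreGraph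

section Animals

variable {d : ℕ}

lemma IsAnimalOn.addPendant {Bd : Sym2 (Site d) → Prop} {H : PreGraph d} {x y : Site d}
    (hH : IsAnimalOn Bd H) (hy : y ∈ H.sites) (hxy : Bd s(x, y)) :
    IsAnimalOn Bd (H.addPendant x y) := by
  obtain ⟨-, hbd, hends, hconn⟩ := hH
  refine ⟨Finset.insert_nonempty _ _, ?_, ?_, ?_⟩
  · simpa [PreGraph.addPendant] using ⟨hxy, hbd⟩
  · simp only [PreGraph.addPendant, Sym2.mem_iff, forall_eq_or_imp,
      forall_eq, Finset.mem_insert, true_or, hy, or_true, true_and]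
    exact fun b hb z hz => Or.inr (hends b hb z hz)
  have hmono : Adj H ≤ Adj (H.addPendant x y) := fun _ _ h => Finset.mem_insert_of_mem h
  have from_x : ∀ z ∈ (H.addPendant x y).sites,
      Relation.ReflTransGen (Adj (H.addPendant x y)) x z := by
    simp only [PreGraph.addPendant, Finset.forall_mem_insert]
    exact ⟨.refl, fun z hz => .head (Finset.mem_insert_self _ _)
      (Relation.ReflTransGen.mono hmono _ _ (hconn y hy z hz))⟩
  exact fun z hz w hw => (Std.Symm.symm _ _ (from_x z hz)).trans (from_x w hw)

lemma IsLatticeBond.map_add {b : Sym2 (Site d)} (hb : IsLatticeBond b) (u : Site d) :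
    IsLatticeBond (b.map (· + u)) := by
  obtain ⟨x, y, rfl, hsum⟩ := hb
  exact ⟨x + u, y + u, rfl, by simpa using hsum⟩

lemma IsBondAnimal.translate {G : PreGraph d} (hG : IsBondAnimal G) (u : Site d) :
    IsBondAnimal (translateCluster G u) := by
  obtain ⟨hne, hbd, hends, hconn⟩ := hG
  refine ⟨hne.image _, ?_, ?_, ?_⟩
  · simp only [translateCluster, Finset.forall_mem_image]
    exact fun b hb => (hbd b hb).map_add u
  · simp only [translateCluster, Finset.forall_mem_image, Sym2.mem_map, forall_exists_index,
      and_imp, forall_apply_eq_imp_iff₂]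
    exact fun b hb z hz => Finset.mem_image_of_mem _ (hends b hb z hz)
  · simp only [translateCluster, Finset.forall_mem_image]
    refine fun z hz w hw => Relation.ReflTransGen.lift (· + u) (fun a c hac => ?_) _ _
      (hconn z hz w hw)
    exact Finset.mem_image_of_mem _ hac

lemma translateCluster_injective (u : Site d) :
    Function.Injective (translateCluster · u : PreGraph d → PreGraph d) := by
  rintro ⟨s, b⟩ ⟨s', b'⟩ h
  simp only [translateCluster, PreGraph.mk.injEq] at h
  exact congrArg₂ PreGraph.mk (Finset.image_injective (add_left_injective u) h.1)
    (Finset.image_injective (Sym2.map.injective (add_left_injective u)) h.2)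

end Animals

section Origin

variable {d : ℕ} [NeZero d]

lemma LexMinAtOrigin.apply_zero_nonneg {G : PreGraph d} (hG : LexMinAtOrigin G) {x : Site d}
    (hx : x ∈ G.sites) : 0 ≤ x 0 := by
  obtain rfl | ⟨i, hbefore, hi⟩ := hG.2 x hx
  · rfl
  obtain rfl | hi0 := eq_or_ne i 0
  · exact hi.le
  · exact (hbefore 0 ((Fin.pos_iff_ne_zero' i).2 hi0)).le

lemma LexMinAtOrigin.apply_zero_pos_of_mem_translate {G : PreGraph d} (hG : LexMinAtOrigin G)
    {x : Site d} (hx : x ∈ (translateCluster G (Pi.single 0 1)).sites) : 0 < x 0 := by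
  obtain ⟨y, hy, rfl⟩ := Finset.mem_image.1 hx
  simpa using hG.apply_zero_nonneg hy

lemma isLatticeBond_zero_single : IsLatticeBond s((0 : Site d), Pi.single 0 1) :=
  ⟨0, Pi.single 0 1, rfl, by simp [Pi.single_apply, apply_ite]⟩

def prependOrigin (G : PreGraph d) : PreGraph d :=
  (translateCluster G (Pi.single 0 1)).addPendant 0 (Pi.single 0 1)

lemma IsBondAnimal.prependOrigin {G : PreGraph d} (hG : IsBondAnimal G)
    (hmin : LexMinAtOrigin G) : IsBondAnimal (prependOrigin G) :=
  (hG.translate _).addPendant (Finset.mem_image.2 ⟨0, hmin.1, zero_add _⟩)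
    isLatticeBond_zero_single

lemma LexMinAtOrigin.zero_notMem_translate {G : PreGraph d} (hG : LexMinAtOrigin G) :
    (0 : Site d) ∉ (translateCluster G (Pi.single 0 1)).sites :=
  fun h => (hG.apply_zero_pos_of_mem_translate h).ne rfl

lemma LexMinAtOrigin.bond_notMem_translate {G : PreGraph d} (hG : IsBondAnimal G)
    (hmin : LexMinAtOrigin G) :
    s((0 : Site d), Pi.single 0 1) ∉ (translateCluster G (Pi.single 0 1)).bonds :=
  fun h => hmin.zero_notMem_translate ((hG.translate _).2.2.1 _ h 0 (Sym2.mem_mk_left _ _))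

lemma LexMinAtOrigin.prependOrigin {G : PreGraph d} (hG : LexMinAtOrigin G) :
    LexMinAtOrigin (prependOrigin G) := by
  refine ⟨Finset.mem_insert_self _ _, fun x hx => ?_⟩
  obtain rfl | hx := Finset.mem_insert.1 hx
  · exact .inl rfl
  · exact .inr ⟨0, fun j hj => by simp at hj, hG.apply_zero_pos_of_mem_translate hx⟩

lemma card_prependOrigin_sites {G : PreGraph d} (hG : LexMinAtOrigin G) :
    (prependOrigin G).sites.card = G.sites.card + 1 := by
  rw [prependOrigin, addPendant, Finset.card_insert_of_notMem hG.zero_notMem_translate,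
    translateCluster, Finset.card_image_of_injective _ (add_left_injective _)]

lemma erase_prependOrigin {G : PreGraph d} (hG : IsBondAnimal G) (hmin : LexMinAtOrigin G) :
    (⟨(prependOrigin G).sites.erase 0, (prependOrigin G).bonds.erase s(0, Pi.single 0 1)⟩ :
      PreGraph d) = translateCluster G (Pi.single 0 1) := by
  rw [prependOrigin, addPendant, Finset.erase_insert hmin.zero_notMem_translate,
    Finset.erase_insert (hmin.bond_notMem_translate hG)]

lemma mapsTo_prependOrigin_Cstar (n : ℕ) :
    Set.MapsTo prependOrigin (Cstar (IsBondAnimal (d := d)) n)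
      (Cstar (IsBondAnimal (d := d)) (n + 1)) := fun _ ⟨hG, hcard, hmin⟩ =>
  ⟨hG.prependOrigin hmin, hcard ▸ card_prependOrigin_sites hmin, hmin.prependOrigin⟩

lemma injOn_prependOrigin_Cstar (n : ℕ) :
    Set.InjOn prependOrigin (Cstar (IsBondAnimal (d := d)) n) := by
  rintro G ⟨hG, -, hmin⟩ G' ⟨hG', -, hmin'⟩ h
  refine translateCluster_injective (Pi.single 0 1) ?_
  dsimp only
  rw [← erase_prependOrigin hG hmin, ← erase_prependOrigin hG' hmin', h]

lemma exists_mul_wt_le_wt_prependOrigin {wt : PreGraph d → ℝ≥0∞}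
    (hwt : IsWeight IsBondAnimal wt) :
    ∃ c : ℝ≥0∞, 0 < c ∧ ∀ G, IsBondAnimal G → LexMinAtOrigin G →
      c * wt G ≤ wt (prependOrigin G) := by
  obtain ⟨-, htrans, hCA2⟩ := hwt
  obtain ⟨γ, -, hγ, hγwt⟩ := hCA2 2
  refine ⟨γ⁻¹, ENNReal.inv_pos.2 hγ, fun G hG hmin => ?_⟩
  rw [← htrans G (Pi.single 0 1), ← ENNReal.div_eq_inv_mul]
  exact (hγwt _ _ (hG.translate _) (hG.prependOrigin hmin)
    (card_symmDiff_addPendant hmin.zero_notMem_translate (hmin.bond_notMem_translate hG)).le).1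

end Origin

lemma mul_Gsum_le_Gsum_of_injOn {d : ℕ} {S T : Set (PreGraph d)} {wt : PreGraph d → ℝ≥0∞}
    {c : ℝ≥0∞} {f : PreGraph d → PreGraph d} (hST : Set.MapsTo f S T) (hf : Set.InjOn f S)
    (hc : ∀ G ∈ S, c * wt G ≤ wt (f G)) : c * Gsum S wt ≤ Gsum T wt :=
  calc c * Gsum S wt = ∑' G : S, c * wt G := ENNReal.tsum_mul_left.symm
    _ ≤ ∑' G : S, wt (hST.restrict f S T G) := ENNReal.tsum_le_tsum fun G => hc G G.2
    _ ≤ Gsum T wt := ENNReal.tsum_comp_le_tsum_of_injective (hST.restrict_inj.2 hf) _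

/-- **Bounded downward ratios for weighted bond animals** (Proposition 3.5 for bond
animals on `ℤ^d`): there is `Υ > 0` with `𝒢ₙ₊₁ ≥ Υ 𝒢ₙ` for all large `n`. -/
theorem downward_ratio_bond_animals
    (d : ℕ) (hd : 2 ≤ d)
    (wt : PreGraph d → ℝ≥0∞) (hwt : IsWeight IsBondAnimal wt) :
    ∃ Υ : ℝ≥0∞, 0 < Υ ∧ ∃ N : ℕ, ∀ n ≥ N,
      Υ * Gsum (Cstar (IsBondAnimal (d := d)) n) wt
        ≤ Gsum (Cstar (IsBondAnimal (d := d)) (n + 1)) wt := by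
  have : NeZero d := ⟨by omega⟩
  obtain ⟨c, hc, hcwt⟩ := exists_mul_wt_le_wt_prependOrigin hwt
  exact ⟨c, hc, 0, fun n _ => mul_Gsum_le_Gsum_of_injOn (mapsTo_prependOrigin_Cstar n)
    (injOn_prependOrigin_Cstar n) fun G hG => hcwt G hG.1 hG.2.2⟩
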